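/- Let G be a simple graph on [n], m ≥ 2, i ∈ [m], j ∈ [n], and let p, q be two neighbors of the vertex j in G with p ≠ q. Then for any 1 ≤ k < l ≤ m, the polynomial x_{i,j}(x_{k,p}x_{l,q} − x_{k,q}x_{l,p}) belongs to J_{K_m,G}. Explicitly, x_{i,j}(x_{k,p}x_{l,q} − x_{k,q}x_{l,p}) = x_{k,p}(x_{i,j}x_{l,q} − x_{i,q}x_{l,j}) + x_{i,q}(x_{k,p}x_{l,j} − x_{k,j}x_{l,p}) + x_{l,p}(x_{i,q}x_{k,j} − x_{i,j}x_{k,q}). -/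

import Mathlib

open MvPolynomial

noncomputable def minor (K : Type*) [Field K] (i j k l : ℕ) : MvPolynomial (ℕ × ℕ) K :=
  X (i, k) * X (j, l) - X (i, l) * X (j, k)

noncomputable def genBEI (K : Type*) [Field K] (m : ℕ) (G : SimpleGraph ℕ) :
    Ideal (MvPolynomial (ℕ × ℕ) K) :=
  Ideal.span {f | ∃ i j k l : ℕ, 1 ≤ i ∧ i < j ∧ j ≤ m ∧ k < l ∧ G.Adj k l ∧ f = minor K i j k l}

section minor

variable (K : Type*) [Field K] (a b c d : ℕ)

theorem minor_swap_rows : minor K b a c d = -minor K a b c d := by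
  unfold minor; ring

theorem minor_swap_cols : minor K a b d c = -minor K a b c d := by
  unfold minor; ring

theorem minor_self_rows : minor K a a c d = 0 := by
  unfold minor; ring

end minor

section genBEI

variable {K : Type*} [Field K] {m : ℕ} {G : SimpleGraph ℕ} {a b c d : ℕ}

theorem minor_mem_genBEI_of_lt (ha : 1 ≤ a) (hab : a < b) (hb : b ≤ m) (hcd : G.Adj c d) :
    minor K a b c d ∈ genBEI K m G := by
  rcases lt_or_gt_of_ne hcd.ne with hlt | hgt
  · exact Ideal.subset_span ⟨a, b, c, d, ha, hab, hb, hlt, hcd, rfl⟩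
  · rw [← neg_mem_iff, ← minor_swap_cols]
    exact Ideal.subset_span ⟨a, b, d, c, ha, hab, hb, hgt, hcd.symm, rfl⟩

theorem minor_mem_genBEI (ha : a ∈ Set.Icc 1 m) (hb : b ∈ Set.Icc 1 m) (hcd : G.Adj c d) :
    minor K a b c d ∈ genBEI K m G := by
  rcases lt_trichotomy a b with hlt | rfl | hgt
  · exact minor_mem_genBEI_of_lt ha.1 hlt hb.2 hcd
  · rw [minor_self_rows]
    exact zero_mem _
  · rw [← neg_mem_iff, ← minor_swap_rows]
    exact minor_mem_genBEI_of_lt hb.1 hgt ha.2 hcd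

end genBEI

theorem X_mul_minor_of_neighbors_mem_genBEI_general
    (K : Type*) [Field K] (m : ℕ)
    (G : SimpleGraph ℕ)
    (i j : ℕ) (hi : i ∈ Set.Icc 1 m)
    (p q : ℕ) (hp : G.Adj j p) (hq : G.Adj j q)
    (k l : ℕ) (hk : 1 ≤ k) (hkl : k < l) (hlm : l ≤ m) :
    X (i, j) * (X (k, p) * X (l, q) - X (k, q) * X (l, p)) ∈ genBEI K m G ∧
    (X (i, j) : MvPolynomial (ℕ × ℕ) K) * (X (k, p) * X (l, q) - X (k, q) * X (l, p)) =
      X (k, p) * (X (i, j) * X (l, q) - X (i, q) * X (l, j)) +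
      X (i, q) * (X (k, p) * X (l, j) - X (k, j) * X (l, p)) +
      X (l, p) * (X (i, q) * X (k, j) - X (i, j) * X (k, q)) := by
  have hk' : k ∈ Set.Icc 1 m := ⟨hk, hkl.le.trans hlm⟩
  have hl : l ∈ Set.Icc 1 m := ⟨hk.trans hkl.le, hlm⟩
  have hid : (X (i, j) : MvPolynomial (ℕ × ℕ) K) *
      (X (k, p) * X (l, q) - X (k, q) * X (l, p)) =
      X (k, p) * (X (i, j) * X (l, q) - X (i, q) * X (l, j)) +
      X (i, q) * (X (k, p) * X (l, j) - X (k, j) * X (l, p)) +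
      X (l, p) * (X (i, q) * X (k, j) - X (i, j) * X (k, q)) := by ring
  refine ⟨?_, hid⟩
  rw [hid]
  -- the three brackets are `minor K i l j q`, `minor K k l p j` and `minor K i k q j`
  exact add_mem (add_mem
    (Ideal.mul_mem_left _ _ (minor_mem_genBEI hi hl hq))
    (Ideal.mul_mem_left _ _ (minor_mem_genBEI hk' hl hp.symm)))
    (Ideal.mul_mem_left _ _ (minor_mem_genBEI hi hk' hq.symm))

/-- If `p, q` are distinct neighbors of `j` in `G`, then for any `i ∈ [m]` and
`1 ≤ k < l ≤ m`, the polynomial `x_{i,j}(x_{k,p}x_{l,q} − x_{k,q}x_{l,p})` belongs to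
`J_{K_m,G}`, and the explicit three-term identity holds. -/
theorem X_mul_minor_of_neighbors_mem_genBEI
    (K : Type*) [Field K] (m n : ℕ) (hm : 2 ≤ m)
    (G : SimpleGraph ℕ)
    (hGrange : ∀ u v : ℕ, G.Adj u v → u ∈ Set.Icc 1 n ∧ v ∈ Set.Icc 1 n)
    (i j : ℕ) (hi : i ∈ Set.Icc 1 m) (hj : j ∈ Set.Icc 1 n)
    (p q : ℕ) (hp : G.Adj j p) (hq : G.Adj j q) (hpq : p ≠ q)
    (k l : ℕ) (hk : 1 ≤ k) (hkl : k < l) (hlm : l ≤ m) :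
    X (i, j) * (X (k, p) * X (l, q) - X (k, q) * X (l, p)) ∈ genBEI K m G ∧
    (X (i, j) : MvPolynomial (ℕ × ℕ) K) * (X (k, p) * X (l, q) - X (k, q) * X (l, p)) =
      X (k, p) * (X (i, j) * X (l, q) - X (i, q) * X (l, j)) +
      X (i, q) * (X (k, p) * X (l, j) - X (k, j) * X (l, p)) +
      X (l, p) * (X (i, q) * X (k, j) - X (i, j) * X (k, q)) :=
  X_mul_minor_of_neighbors_mem_genBEI_general K m G i j hi p q hp hq k l hk hkl hlm
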